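/- Let G be a group and let s, r ∈ G. Suppose there is a group isomorphism Ψ : G/⟨⟨r⟩⟩ ≅ G/⟨⟨s⟩⟩ between the quotients of G by the normal closures of r and of s. Then there is a bijection between the set X^{irr}(s) = { χ_ρ | ρ : G → PSL₂(ℂ) an irreducible homomorphism with ρ(s) = 1 } and the corresponding set X^{irr}(r) (defined with r in place of s). -/

import Mathlib

open Matrix

noncomputable section

/-- `SL₂(ℂ)`. -/
abbrev SL2 := Matrix.SpecialLinearGroup (Fin 2) ℂ

/-- `PSL₂(ℂ)`, the quotient of `SL₂(ℂ)` by its center `{±I}`. -/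
abbrev PSL2 := SL2 ⧸ Subgroup.center SL2

/-- The squared trace, well defined on `PSL₂(ℂ)`: for `x ∈ PSL₂(ℂ)`, `trSq x = (tr Ã)²`
for any lift `Ã ∈ SL₂(ℂ)` of `x`. -/
def trSq : PSL2 → ℂ :=
  Quotient.lift (fun A : SL2 => (Matrix.trace (A : Matrix (Fin 2) (Fin 2) ℂ)) ^ 2) (by
    intro a b hab
    replace hab := QuotientGroup.leftRel_apply.mp hab
    obtain ⟨r, hr, hscal⟩ := Matrix.SpecialLinearGroup.mem_center_iff.mp hab
    have hb : b = a * (a⁻¹ * b) := by group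
    have hb' : (b : Matrix (Fin 2) (Fin 2) ℂ)
        = (a : Matrix (Fin 2) (Fin 2) ℂ) * Matrix.scalar (Fin 2) r := by
      calc (b : Matrix (Fin 2) (Fin 2) ℂ)
          = ((a * (a⁻¹ * b) : SL2) : Matrix (Fin 2) (Fin 2) ℂ) := by rw [← hb]
        _ = (a : Matrix (Fin 2) (Fin 2) ℂ) * ((a⁻¹ * b : SL2) : Matrix (Fin 2) (Fin 2) ℂ) := rfl
        _ = (a : Matrix (Fin 2) (Fin 2) ℂ) * Matrix.scalar (Fin 2) r := by rw [hscal]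
    have hcard : Fintype.card (Fin 2) = 2 := by simp
    rw [hcard] at hr
    have htr : Matrix.trace ((a : Matrix (Fin 2) (Fin 2) ℂ) * Matrix.scalar (Fin 2) r)
        = r * Matrix.trace (a : Matrix (Fin 2) (Fin 2) ℂ) := by
      simp [Matrix.trace, Matrix.diag, Matrix.mul_apply, Matrix.scalar_apply,
        Matrix.diagonal, Fin.sum_univ_two]
      ring
    simp only [hb', htr]
    ring_nf
    rw [hr, mul_one])
/-- The quotient map `SL₂(ℂ) → PSL₂(ℂ)`. -/
def toPSL2 : SL2 →* PSL2 := QuotientGroup.mk' (Subgroup.center SL2)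

/-- The `PSL₂(ℂ)`-character `χ_ρ` of a representation `ρ : G → PSL₂(ℂ)`:
`χ_ρ(g) = (tr Ã)²` for any lift `Ã ∈ SL₂(ℂ)` of `ρ(g)`. -/
def character {G : Type*} [Group G] (ρ : G →* PSL2) : G → ℂ := fun g => trSq (ρ g)

/-- The diagonal matrix `diag(z, z⁻¹)` as an element of `SL₂(ℂ)`. -/
def diagSL (z : ℂˣ) : SL2 :=
  ⟨!![(z : ℂ), 0; 0, ((z⁻¹ : ℂˣ) : ℂ)], by simp [Matrix.det_fin_two_of]⟩

/-- The anti-diagonal matrix with anti-diagonal entries `(w, -w⁻¹)` as an element of `SL₂(ℂ)`. -/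
def antidiagSL (w : ℂˣ) : SL2 :=
  ⟨!![0, (w : ℂ); -((w⁻¹ : ℂˣ) : ℂ), 0], by simp [Matrix.det_fin_two_of]⟩

/-- The subgroup `N ⊂ PSL₂(ℂ)`: classes of `diag(z, z⁻¹)` and of anti-diagonal
matrices with entries `(w, -w⁻¹)`. -/
def NSet : Set PSL2 :=
  { x | (∃ z : ℂˣ, x = toPSL2 (diagSL z)) ∨ (∃ w : ℂˣ, x = toPSL2 (antidiagSL w)) }

/-- `ρ` conjugates into `N`: some `PSL₂(ℂ)`-conjugate of `ρ` has image contained in `N`. -/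
def ConjugatesIntoN {G : Type*} [Group G] (ρ : G →* PSL2) : Prop :=
  ∃ c : PSL2, ∀ g : G, c * ρ g * c⁻¹ ∈ NSet

/-- `ρ` has non-abelian image. -/
def HasNonabelianImage {G : Type*} [Group G] (ρ : G →* PSL2) : Prop :=
  ∃ g h : G, ρ g * ρ h ≠ ρ h * ρ g

/-- The image in `PSL₂(ℂ)` of the subgroup of upper-triangular matrices of `SL₂(ℂ)`. -/
def UpperTriangularPSL : Set PSL2 :=
  { x | ∃ A : SL2, (A : Matrix (Fin 2) (Fin 2) ℂ) 1 0 = 0 ∧ x = toPSL2 A }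

/-- `ρ` is reducible: some `PSL₂(ℂ)`-conjugate of `ρ` has image contained in the image in
`PSL₂(ℂ)` of the upper-triangular subgroup of `SL₂(ℂ)`. -/
def IsReducible {G : Type*} [Group G] (ρ : G →* PSL2) : Prop :=
  ∃ c : PSL2, ∀ g : G, c * ρ g * c⁻¹ ∈ UpperTriangularPSL

/-- `X^{irr}(s)`: the set of characters `χ_ρ` of irreducible homomorphisms `ρ : G → PSL₂(ℂ)`
with `ρ(s) = 1`. -/
def XirrSet (G : Type*) [Group G] (s : G) : Set (G → ℂ) :=
  { χ | ∃ ρ : G →* PSL2, ρ s = 1 ∧ ¬ IsReducible ρ ∧ χ = character ρ }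

section Aux

variable {G : Type*} [Group G]

/-- The transfer of a character along an isomorphism of quotients. -/
def Xmap (s r : G)
    (Ψ : (G ⧸ Subgroup.normalClosure ({r} : Set G)) ≃*
      (G ⧸ Subgroup.normalClosure ({s} : Set G))) (χ : G → ℂ) : G → ℂ :=
  fun g => χ (Ψ (QuotientGroup.mk g)).out

lemma Xirr_const (s : G) {χ : G → ℂ} (hχ : χ ∈ XirrSet G s) {g g' : G}
    (h : (QuotientGroup.mk g : G ⧸ Subgroup.normalClosure ({s} : Set G)) = QuotientGroup.mk g') :
    χ g = χ g' := by
  obtain ⟨ρ, hs, _, rfl⟩ := hχ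
  have hker : Subgroup.normalClosure ({s} : Set G) ≤ ρ.ker :=
    Subgroup.normalClosure_le_normal (by simpa [MonoidHom.mem_ker] using hs)
  have : g⁻¹ * g' ∈ Subgroup.normalClosure ({s} : Set G) := by
    rwa [QuotientGroup.eq] at h
  have hρ : ρ g = ρ g' := by
    have := hker this
    rw [MonoidHom.mem_ker, _root_.map_mul, _root_.map_inv, inv_mul_eq_one] at this
    exact this
  simp [character, hρ]

lemma Xmap_mem (s r : G)
    (Ψ : (G ⧸ Subgroup.normalClosure ({r} : Set G)) ≃*
      (G ⧸ Subgroup.normalClosure ({s} : Set G)))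
    {χ : G → ℂ} (hχ : χ ∈ XirrSet G s) : Xmap s r Ψ χ ∈ XirrSet G r := by
  obtain ⟨ρ, hs, hirr, hchar⟩ := hχ
  have hker : ∀ x ∈ Subgroup.normalClosure ({s} : Set G), ρ x = 1 := fun x hx =>
    Subgroup.normalClosure_le_normal (N := ρ.ker)
      (by simpa [MonoidHom.mem_ker] using hs) hx
  set ρb : (G ⧸ Subgroup.normalClosure ({s} : Set G)) →* PSL2 :=
    QuotientGroup.lift _ ρ hker with hρb
  set ρ' : G →* PSL2 :=
    ρb.comp (Ψ.toMonoidHom.comp (QuotientGroup.mk' (Subgroup.normalClosure ({r} : Set G))))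
    with hρ'
  have hρ'app : ∀ g : G, ρ' g = ρb (Ψ (QuotientGroup.mk g)) := fun g => rfl
  have hb : ∀ g : G, ρb (QuotientGroup.mk g) = ρ g := fun g => rfl
  have hsurj : ∀ x : G ⧸ Subgroup.normalClosure ({s} : Set G),
      ∃ g : G, ρ' g = ρb x := by
    intro x
    refine ⟨(Ψ.symm x).out, ?_⟩
    rw [hρ'app, QuotientGroup.out_eq']
    simp
  refine ⟨ρ', ?_, ?_, ?_⟩
  · rw [hρ'app]
    have : (QuotientGroup.mk r : G ⧸ Subgroup.normalClosure ({r} : Set G)) = 1 :=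
      (QuotientGroup.eq_one_iff r).mpr (Subgroup.subset_normalClosure rfl)
    rw [this, _root_.map_one, _root_.map_one]
  · intro ⟨c, hc⟩
    apply hirr
    refine ⟨c, fun g => ?_⟩
    obtain ⟨g', hg'⟩ := hsurj (QuotientGroup.mk g)
    have : ρ g = ρ' g' := by rw [hg', hb]
    rw [this]
    exact hc g'
  · funext g
    have : (QuotientGroup.mk ((Ψ (QuotientGroup.mk g)).out) :
        G ⧸ Subgroup.normalClosure ({s} : Set G)) = Ψ (QuotientGroup.mk g) :=
      QuotientGroup.out_eq' _
    simp only [Xmap, hchar, character, hρ'app]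
    rw [← hb, this]

lemma Xmap_inv (s r : G)
    (Ψ : (G ⧸ Subgroup.normalClosure ({r} : Set G)) ≃*
      (G ⧸ Subgroup.normalClosure ({s} : Set G)))
    {χ : G → ℂ} (hχ : χ ∈ XirrSet G s) : Xmap r s Ψ.symm (Xmap s r Ψ χ) = χ := by
  funext g
  show χ (Ψ (QuotientGroup.mk ((Ψ.symm (QuotientGroup.mk g)).out)) ).out = χ g
  rw [QuotientGroup.out_eq', MulEquiv.apply_symm_apply]
  exact Xirr_const s hχ (QuotientGroup.out_eq' _)

end Aux

/-- The map `F` on irreducible characters from the proof of Lemma 3.3 of the paper: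
if the quotients of `G` by the normal closures of `r` and of `s` are isomorphic, then
there is a bijection between `X^{irr}(s)` and `X^{irr}(r)`. -/
theorem Xirr_bijection {G : Type*} [Group G] (s r : G)
    (Ψ : (G ⧸ Subgroup.normalClosure ({r} : Set G)) ≃*
      (G ⧸ Subgroup.normalClosure ({s} : Set G))) :
    Nonempty (XirrSet G s ≃ XirrSet G r) := by
  refine ⟨{
    toFun := fun χ => ⟨Xmap s r Ψ χ, Xmap_mem s r Ψ χ.2⟩
    invFun := fun χ => ⟨Xmap r s Ψ.symm χ, Xmap_mem r s Ψ.symm χ.2⟩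
    left_inv := fun χ => Subtype.ext (Xmap_inv s r Ψ χ.2)
    right_inv := fun χ => Subtype.ext (by
      simpa using Xmap_inv r s Ψ.symm χ.2) }⟩
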